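/- arXiv:1503.01582 — 3 statements merged into one kernel-verified Lean document; each statement's English description precedes it below -/
import Mathlib

section
/- For every bounded measurable K ⊆ ℝⁿ, every j ∈ {1,…,n} and R > 0, the quantity θ^j_K(R) := (√2 ⌊n/2+1⌋/√(2π)ⁿ) · inf_{t>0} [ ((R+t)/t)^{n/2} Σ_{i=0}^{⌊n/2+1⌋} (tⁱ/i!) ( Σ_{(j₁,…,j_i)} ∫_K |ξ_j|² ∏_{k=1}^i |ξ_{j_k}|² dξ )^{1/2} ] satisfies θ^j_K(R) ≤ (1/√πⁿ) √(2ν(K)) ⌊n/2+1⌋ d(K) exp(R d(K) √n). -/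
/-!
Every point of `K` has norm at most `d = d(K)`, so each coordinate satisfies `|ξ_k| ≤ d`, and the
integrand `|ξ_j|² ∏ₖ |ξ_{j_k}|²` of the `i`-th moment is at most `d^{2(i+1)}` on `K`. Summing over
the `nⁱ` multi-indices, the `i`-th square root is at most `√ν(K) d (√n d)ⁱ`, so the `t`-th term of the
infimum is at most `((R+t)/t)^{n/2} √ν(K) d exp(t √n d)`. Taking `t = R` gives the factor `√2ⁿ`,
which cancels against `√(2π)ⁿ` in the prefactor.
-/

open MeasureTheory Finset

lemma norm_le_iSup_norm_of_isBounded {E : Type*} [SeminormedAddCommGroup E] {K : Set E}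
    (hK : Bornology.IsBounded K) {ξ : E} (hξ : ξ ∈ K) : ‖ξ‖ ≤ ⨆ x : K, ‖(x : E)‖ := by
  obtain ⟨C, hC⟩ := hK.exists_norm_le
  exact le_ciSup (f := fun x : K => ‖(x : E)‖)
    ⟨C, Set.forall_mem_range.2 fun x => hC x x.2⟩ ⟨ξ, hξ⟩

lemma sq_mul_prod_sq_le {ι : Type*} {ξ : ι → ℝ} {d : ℝ} (hξ : ∀ i, |ξ i| ≤ d) (j : ι) {m : ℕ}
    (g : Fin m → ι) : |ξ j| ^ 2 * ∏ k, |ξ (g k)| ^ 2 ≤ d ^ (2 * (m + 1)) :=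
  calc |ξ j| ^ 2 * ∏ k, |ξ (g k)| ^ 2 ≤ d ^ 2 * ∏ _k : Fin m, d ^ 2 := by
        gcongr with k <;> apply hξ
    _ = d ^ (2 * (m + 1)) := by rw [prod_const, card_univ, Fintype.card_fin, ← pow_mul]; ring

section Moments

variable {ι : Type*} [Fintype ι] {K : Set (EuclideanSpace ℝ ι)}

lemma setIntegral_sq_mul_prod_sq_le (hK : Bornology.IsBounded K) (j : ι) {m : ℕ}
    (g : Fin m → ι) :
    ∫ ξ in K, |ξ j| ^ 2 * ∏ k, |ξ (g k)| ^ 2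
      ≤ (⨆ ξ : K, ‖(ξ : EuclideanSpace ℝ ι)‖) ^ (2 * (m + 1)) * volume.real K := by
  have hbound : ∀ ξ ∈ K, ‖|ξ j| ^ 2 * ∏ k, |ξ (g k)| ^ 2‖
      ≤ (⨆ ξ : K, ‖(ξ : EuclideanSpace ℝ ι)‖) ^ (2 * (m + 1)) := fun ξ hξ => by
    rw [Real.norm_of_nonneg (by positivity)]
    exact sq_mul_prod_sq_le
      (fun i => (PiLp.norm_apply_le ξ i).trans (norm_le_iSup_norm_of_isBounded hK hξ)) j g
  exact (le_abs_self _).trans (norm_setIntegral_le_of_norm_le_const hK.measure_lt_top hbound)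

lemma sqrt_sum_setIntegral_sq_mul_prod_sq_le (hK : Bornology.IsBounded K) (j : ι) (m : ℕ) :
    √(∑ g : Fin m → ι, ∫ ξ in K, |ξ j| ^ 2 * ∏ k, |ξ (g k)| ^ 2)
      ≤ √(volume.real K) * (⨆ ξ : K, ‖(ξ : EuclideanSpace ℝ ι)‖) *
          (√(Fintype.card ι) * ⨆ ξ : K, ‖(ξ : EuclideanSpace ℝ ι)‖) ^ m := by
  set d := ⨆ ξ : K, ‖(ξ : EuclideanSpace ℝ ι)‖
  have hd : 0 ≤ d := Real.iSup_nonneg fun _ => norm_nonneg _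
  rw [Real.sqrt_le_left (by positivity)]
  calc ∑ g : Fin m → ι, ∫ ξ in K, |ξ j| ^ 2 * ∏ k, |ξ (g k)| ^ 2
      ≤ ∑ _g : Fin m → ι, d ^ (2 * (m + 1)) * volume.real K :=
        sum_le_sum fun g _ => setIntegral_sq_mul_prod_sq_le hK j g
    _ = (√(volume.real K) * d * (√(Fintype.card ι) * d) ^ m) ^ 2 := by
        rw [sum_const, card_univ, Fintype.card_fun, Fintype.card_fin, nsmul_eq_mul]
        simp only [mul_pow, ← pow_mul, Real.sq_sqrt measureReal_nonneg]
        rw [pow_mul' √(Fintype.card ι : ℝ), Real.sq_sqrt (Nat.cast_nonneg _)]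
        push_cast
        ring

end Moments

lemma sum_pow_div_factorial_mul_le_mul_exp {N : ℕ} {t a b : ℝ} {c : ℕ → ℝ} (ht : 0 ≤ t)
    (hb : 0 ≤ b) (ha : 0 ≤ a) (hc : ∀ i, c i ≤ a * b ^ i) :
    ∑ i ∈ range N, t ^ i / i.factorial * c i ≤ a * Real.exp (t * b) :=
  calc ∑ i ∈ range N, t ^ i / i.factorial * c i
      ≤ ∑ i ∈ range N, t ^ i / i.factorial * (a * b ^ i) :=
        sum_le_sum fun i _ => mul_le_mul_of_nonneg_left (hc i) (by positivity)
    _ = a * ∑ i ∈ range N, (t * b) ^ i / i.factorial := by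
        rw [mul_sum]; exact sum_congr rfl fun i _ => by ring
    _ ≤ a * Real.exp (t * b) :=
        mul_le_mul_of_nonneg_left (Real.sum_le_exp_of_nonneg (by positivity) N) ha

theorem stmt4_general (n : ℕ) (K : Set (EuclideanSpace ℝ (Fin n)))
    (hKb : Bornology.IsBounded K) (j : Fin n) (R : ℝ) (hR : 0 < R) :
    (Real.sqrt 2 * ((n / 2 + 1 : ℕ) : ℝ) / Real.sqrt (2 * Real.pi) ^ n) *
      (⨅ t : {t : ℝ // 0 < t},
        ((R + t.1) / t.1) ^ ((n : ℝ) / 2) *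
          ∑ i ∈ Finset.range (n / 2 + 2),
            t.1 ^ i / (Nat.factorial i : ℝ) *
              Real.sqrt (∑ g : Fin i → Fin n,
                ∫ ξ in K, |ξ j| ^ 2 * ∏ k : Fin i, |ξ (g k)| ^ 2))
    ≤ (1 / Real.sqrt Real.pi ^ n) * Real.sqrt (2 * (volume K).toReal) *
        ((n / 2 + 1 : ℕ) : ℝ) * (⨆ ξ : K, ‖(ξ : EuclideanSpace ℝ (Fin n))‖) *
        Real.exp (R * (⨆ ξ : K, ‖(ξ : EuclideanSpace ℝ (Fin n))‖) * Real.sqrt n) := by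
  set d := ⨆ ξ : K, ‖(ξ : EuclideanSpace ℝ (Fin n))‖
  have hd : 0 ≤ d := Real.iSup_nonneg fun _ => norm_nonneg _
  have hmoment := sqrt_sum_setIntegral_sq_mul_prod_sq_le hKb j
  rw [Fintype.card_fin] at hmoment
  have hinf : (⨅ t : {t : ℝ // 0 < t}, ((R + t.1) / t.1) ^ ((n : ℝ) / 2) *
      ∑ i ∈ range (n / 2 + 2), t.1 ^ i / (Nat.factorial i : ℝ) *
        √(∑ g : Fin i → Fin n, ∫ ξ in K, |ξ j| ^ 2 * ∏ k : Fin i, |ξ (g k)| ^ 2))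
      ≤ √2 ^ n * (√(volume.real K) * d * Real.exp (R * (√n * d))) := by
    refine (ciInf_le ⟨0, Set.forall_mem_range.2 fun t => ?_⟩ ⟨R, hR⟩).trans ?_
    · have ht := t.2
      positivity
    · rw [show (R + R) / R = 2 by field_simp; ring, Real.rpow_div_two_eq_sqrt _ zero_le_two,
        Real.rpow_natCast]
      gcongr
      exact sum_pow_div_factorial_mul_le_mul_exp hR.le (by positivity) (by positivity) hmoment
  calc _ ≤ (√2 * ((n / 2 + 1 : ℕ) : ℝ) / √(2 * Real.pi) ^ n) *
        (√2 ^ n * (√(volume.real K) * d * Real.exp (R * (√n * d)))) := by gcongr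
    _ = _ := by
        rw [Real.sqrt_mul zero_le_two, Real.sqrt_mul zero_le_two, mul_pow, measureReal_def]
        have h2 : 0 < √2 ^ n := by positivity
        have hπ : 0 < √Real.pi ^ n := by positivity
        field_simp

/-- the quantity `θ^j_K(R)` is bounded by
`(1/√πⁿ) √(2ν(K)) ⌊n/2+1⌋ d(K) exp(R d(K) √n)`. -/
theorem stmt4 (n : ℕ) (hn : 0 < n) (K : Set (EuclideanSpace ℝ (Fin n)))
    (hKb : Bornology.IsBounded K) (hKm : MeasurableSet K) (j : Fin n) (R : ℝ) (hR : 0 < R) :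
    (Real.sqrt 2 * ((n / 2 + 1 : ℕ) : ℝ) / Real.sqrt (2 * Real.pi) ^ n) *
      (⨅ t : {t : ℝ // 0 < t},
        ((R + t.1) / t.1) ^ ((n : ℝ) / 2) *
          ∑ i ∈ Finset.range (n / 2 + 2),
            t.1 ^ i / (Nat.factorial i : ℝ) *
              Real.sqrt (∑ g : Fin i → Fin n,
                ∫ ξ in K, |ξ j| ^ 2 * ∏ k : Fin i, |ξ (g k)| ^ 2))
    ≤ (1 / Real.sqrt Real.pi ^ n) * Real.sqrt (2 * (volume K).toReal) *
        ((n / 2 + 1 : ℕ) : ℝ) * (⨆ ξ : K, ‖(ξ : EuclideanSpace ℝ (Fin n))‖) *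
        Real.exp (R * (⨆ ξ : K, ‖(ξ : EuclideanSpace ℝ (Fin n))‖) * Real.sqrt n) :=
  stmt4_general n K hKb j R hR
end

section
/- Let q_i(x,y) = ((‖x‖²−2)² + ‖y‖² − 1) e^{−(‖x‖²+‖y‖²)/2} on ℝ^{i+1}×ℝ^{n−i−1}, and W = {(x,y) : ‖x‖²+‖y‖² ≤ 5}. Then for every δ ≤ 1/2: (a) on the boundary of W, |q_i| > δ e^{−5/2} (indeed |q_i| ≥ (1/2)e^{−5/2} there); and (b) for every (x,y) ∈ W with |q_i(x,y)| < δ e^{−5/2}, the gradient satisfies ‖d_{(x,y)} q_i‖ > (e^{−5/2}/2)(2 − δ). -/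
/-!
Write `q(x, y) = Q(‖x‖², ‖y‖²)` with `Q(u, v) = A e^{-(u + v)/2}`, `A = (u - 2)² + v - 1`
(`Q` is `qProfile`). On the sphere `u + v = 5`, `A = (u - 5/2)² + 7/4 ≥ 7/4`. Inside `W`,
`|q| < δ e^{-5/2}` forces `|A| < δ`. The chain rule gives `‖d_x q‖ = 2 |∂_u Q| ‖x‖` and
`‖d_y q‖ = 2 |∂_v Q| ‖y‖`. If `‖y‖ ≥ 1/2`, the `y`-part alone is large because
`2 ∂_v Q = (2 - A) e^{-(u+v)/2}`. Otherwise `(u - 2)² = A + 1 - v` lies in `(1/4, 3/2)`, so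
`|2 ∂_u Q| e^{(u+v)/2} = |4 (u - 2) - A| > 3/2` and `‖x‖ > 2/3`.
-/

open Real

noncomputable def qProfile (u v : ℝ) : ℝ :=
  ((u - 2) ^ 2 + v - 1) * exp (-(u + v) / 2)

lemma hasDerivAt_qProfile_left (u v : ℝ) :
    HasDerivAt (qProfile · v)
      ((2 * (u - 2) - ((u - 2) ^ 2 + v - 1) / 2) * exp (-(u + v) / 2)) u := by
  have hA : HasDerivAt (fun t => (t - 2) ^ 2 + v - 1) (2 * (u - 2)) u := by
    simpa using ((((hasDerivAt_id u).sub_const 2).pow 2).add_const v).sub_const 1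
  have hE : HasDerivAt (fun t => exp (-(t + v) / 2)) (exp (-(u + v) / 2) * (-1 / 2)) u := by
    simpa using ((((hasDerivAt_id u).add_const v).neg).div_const 2).exp
  exact (hA.mul hE).congr_deriv (by ring)

lemma hasDerivAt_qProfile_right (u v : ℝ) :
    HasDerivAt (qProfile u ·) ((1 - ((u - 2) ^ 2 + v - 1) / 2) * exp (-(u + v) / 2)) v := by
  have hA : HasDerivAt (fun t => (u - 2) ^ 2 + t - 1) 1 v := by
    simpa using ((hasDerivAt_id v).const_add ((u - 2) ^ 2)).sub_const 1
  have hE : HasDerivAt (fun t => exp (-(u + t) / 2)) (exp (-(u + v) / 2) * (-1 / 2)) v := by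
    simpa using ((((hasDerivAt_id v).const_add u).neg).div_const 2).exp
  exact (hA.mul hE).congr_deriv (by ring)

lemma seven_fourths_mul_exp_le_qProfile {u v : ℝ} (huv : u + v = 5) :
    7 / 4 * exp (-5 / 2) ≤ qProfile u v := by
  have hv : v = 5 - u := by linarith
  rw [qProfile, huv, hv]
  gcongr
  nlinarith [sq_nonneg (u - 5 / 2)]

lemma abs_factor_lt_of_abs_qProfile_lt {δ u v : ℝ} (huv : u + v ≤ 5)
    (h : |qProfile u v| < δ * exp (-5 / 2)) : |(u - 2) ^ 2 + v - 1| < δ := by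
  have hE : exp (-5 / 2) ≤ exp (-(u + v) / 2) := exp_le_exp.mpr (by linarith)
  rw [qProfile, abs_mul, abs_of_pos (exp_pos _)] at h
  exact lt_of_mul_lt_mul_right (h.trans_le' (by gcongr)) (exp_pos _).le

lemma lt_two_mul_abs_deriv_left_or_right {δ s t : ℝ} (hs : 0 ≤ s) (ht : 0 ≤ t)
    (hst : s ^ 2 + t ^ 2 ≤ 5) (hδ : δ ≤ 1 / 2) (hA : |(s ^ 2 - 2) ^ 2 + t ^ 2 - 1| < δ) :
    exp (-5 / 2) / 2 * (2 - δ) <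
        2 * |(2 * (s ^ 2 - 2) - ((s ^ 2 - 2) ^ 2 + t ^ 2 - 1) / 2) *
          exp (-(s ^ 2 + t ^ 2) / 2)| * s ∨
      exp (-5 / 2) / 2 * (2 - δ) <
        2 * |(1 - ((s ^ 2 - 2) ^ 2 + t ^ 2 - 1) / 2) * exp (-(s ^ 2 + t ^ 2) / 2)| * t := by
  set A := (s ^ 2 - 2) ^ 2 + t ^ 2 - 1
  have hE : exp (-5 / 2) ≤ exp (-(s ^ 2 + t ^ 2) / 2) := exp_le_exp.mpr (by linarith)
  set E := exp (-(s ^ 2 + t ^ 2) / 2)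
  have hE_pos : 0 < E := exp_pos _
  clear_value E
  obtain ⟨hAl, hAr⟩ := abs_lt.mp hA
  rcases le_or_gt (1 / 2) t with ht2 | ht2
  · right
    rw [abs_mul, abs_of_pos hE_pos, abs_of_pos (by linarith : 0 < 1 - A / 2)]
    calc exp (-5 / 2) / 2 * (2 - δ) ≤ E / 2 * (2 - δ) := by gcongr; linarith
      _ < (2 - A) * E * (1 / 2) := by nlinarith
      _ ≤ (2 - A) * E * t := by gcongr; nlinarith
      _ = 2 * ((1 - A / 2) * E) * t := by ring
  · left
    have hs23 : 2 / 3 < s := by nlinarith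
    have hM : 3 / 2 < |4 * (s ^ 2 - 2) - A| := by
      rcases lt_or_ge (s ^ 2) 2 with h2 | h2
      · rw [abs_of_neg (by nlinarith)]; nlinarith
      · rw [abs_of_pos (by nlinarith)]; nlinarith
    rw [show 2 * (s ^ 2 - 2) - A / 2 = (4 * (s ^ 2 - 2) - A) / 2 by ring, abs_mul, abs_div,
      abs_two, abs_of_pos hE_pos]
    calc exp (-5 / 2) / 2 * (2 - δ) ≤ E := by nlinarith [abs_nonneg A, exp_pos (-5 / 2)]
      _ = 3 / 2 * E * (2 / 3) := by ring
      _ < |4 * (s ^ 2 - 2) - A| * E * s := by gcongr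
      _ = 2 * (|4 * (s ^ 2 - 2) - A| / 2 * E) * s := by ring

lemma norm_fderiv_comp_norm_sq {E : Type*} [NormedAddCommGroup E] [InnerProductSpace ℝ E]
    {g : ℝ → ℝ} {g' : ℝ} {x : E} (hg : HasDerivAt g g' (‖x‖ ^ 2)) :
    ‖fderiv ℝ (fun y => g (‖y‖ ^ 2)) x‖ = 2 * |g'| * ‖x‖ := by
  have h : HasFDerivAt (fun y => g (‖y‖ ^ 2)) (g' • 2 • innerSL ℝ x) x :=
    hg.comp_hasFDerivAt x (hasStrictFDerivAt_norm_sq x).hasFDerivAt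
  rw [h.fderiv, ← Nat.cast_smul_eq_nsmul ℝ, norm_smul, norm_smul, innerSL_apply_norm,
    Real.norm_eq_abs, Real.norm_natCast]
  push_cast
  ring

lemma lt_sqrt_sq_add_sq {a b c : ℝ} (h : c < a ∨ c < b) : c < √(a ^ 2 + b ^ 2) := by
  rcases h with h | h
  · exact h.trans_le (Real.le_sqrt_of_sq_le (le_add_of_nonneg_right (sq_nonneg b)))
  · exact h.trans_le (Real.le_sqrt_of_sq_le (le_add_of_nonneg_left (sq_nonneg a)))

theorem stmt13_general (n i : ℕ) (δ : ℝ) (hδ : δ ≤ 1 / 2)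
    (q : (EuclideanSpace ℝ (Fin (i + 1)) × EuclideanSpace ℝ (Fin (n - i - 1))) → ℝ)
    (hq : q = fun p => ((‖p.1‖ ^ 2 - 2) ^ 2 + ‖p.2‖ ^ 2 - 1) *
      Real.exp (-(‖p.1‖ ^ 2 + ‖p.2‖ ^ 2) / 2)) :
    -- (a) on the boundary sphere of W
    (∀ p : EuclideanSpace ℝ (Fin (i + 1)) × EuclideanSpace ℝ (Fin (n - i - 1)),
      ‖p.1‖ ^ 2 + ‖p.2‖ ^ 2 = 5 →
        δ * Real.exp (-5 / 2) < |q p| ∧ (1 / 2) * Real.exp (-5 / 2) ≤ |q p|) ∧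
    -- (b) gradient lower bound where |q| is small inside W
    (∀ p : EuclideanSpace ℝ (Fin (i + 1)) × EuclideanSpace ℝ (Fin (n - i - 1)),
      ‖p.1‖ ^ 2 + ‖p.2‖ ^ 2 ≤ 5 → |q p| < δ * Real.exp (-5 / 2) →
        (Real.exp (-5 / 2) / 2) * (2 - δ) <
          Real.sqrt (‖fderiv ℝ (fun x => q (x, p.2)) p.1‖ ^ 2 +
            ‖fderiv ℝ (fun y => q (p.1, y)) p.2‖ ^ 2)) := by
  replace hq : q = fun p => qProfile (‖p.1‖ ^ 2) (‖p.2‖ ^ 2) := hq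
  subst hq
  dsimp only
  refine ⟨fun p hp => ?_, fun p hp hsmall => ?_⟩
  · have h := seven_fourths_mul_exp_le_qProfile hp
    have hE0 := exp_pos (-5 / 2)
    rw [abs_of_pos (h.trans_lt' (by positivity))]
    constructor <;> nlinarith
  · rw [norm_fderiv_comp_norm_sq (hasDerivAt_qProfile_left _ _),
      norm_fderiv_comp_norm_sq (g := qProfile (‖p.1‖ ^ 2)) (hasDerivAt_qProfile_right _ _)]
    exact lt_sqrt_sq_add_sq <| lt_two_mul_abs_deriv_left_or_right (norm_nonneg _)
      (norm_nonneg _) hp hδ (abs_factor_lt_of_abs_qProfile_lt hp hsmall)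

/-- quantitative transversality of
`q_i(x,y) = ((‖x‖²−2)² + ‖y‖² − 1) e^{−(‖x‖²+‖y‖²)/2}` on `W = {‖x‖²+‖y‖² ≤ 5}`:
for every `δ ≤ 1/2`, `|q_i| ≥ (1/2)e^{−5/2}` on the boundary of `W` (hence `> δ e^{−5/2}`),
and wherever `|q_i| < δ e^{−5/2}` inside `W` the gradient has norm `> (e^{−5/2}/2)(2−δ)`. -/
theorem stmt13 (n i : ℕ) (hn : 0 < n) (hi : i < n) (δ : ℝ) (hδ0 : 0 < δ) (hδ : δ ≤ 1 / 2)
    (q : (EuclideanSpace ℝ (Fin (i + 1)) × EuclideanSpace ℝ (Fin (n - i - 1))) → ℝ)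
    (hq : q = fun p => ((‖p.1‖ ^ 2 - 2) ^ 2 + ‖p.2‖ ^ 2 - 1) *
      Real.exp (-(‖p.1‖ ^ 2 + ‖p.2‖ ^ 2) / 2)) :
    -- (a) on the boundary sphere of W
    (∀ p : EuclideanSpace ℝ (Fin (i + 1)) × EuclideanSpace ℝ (Fin (n - i - 1)),
      ‖p.1‖ ^ 2 + ‖p.2‖ ^ 2 = 5 →
        δ * Real.exp (-5 / 2) < |q p| ∧ (1 / 2) * Real.exp (-5 / 2) ≤ |q p|) ∧
    -- (b) gradient lower bound where |q| is small inside W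
    (∀ p : EuclideanSpace ℝ (Fin (i + 1)) × EuclideanSpace ℝ (Fin (n - i - 1)),
      ‖p.1‖ ^ 2 + ‖p.2‖ ^ 2 ≤ 5 → |q p| < δ * Real.exp (-5 / 2) →
        (Real.exp (-5 / 2) / 2) * (2 - δ) <
          Real.sqrt (‖fderiv ℝ (fun x => q (x, p.2)) p.1‖ ^ 2 +
            ‖fderiv ℝ (fun y => q (p.1, y)) p.2‖ ^ 2)) :=
  stmt13_general n i δ hδ q hq
end

section
/- For every n ≥ 1 and i ∈ {0,…,n−1}, the function q_i(x,y) = ((‖x‖²−2)² + ‖y‖² − 1) e^{−(‖x‖²+‖y‖²)/2} on ℝ^{i+1}×ℝ^{n−i−1} satisfies ‖q_i‖_{L²(ℝⁿ)} ≤ √(3/2) · π^{n/4} · (n+6)². -/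
/-!
Bound the integrand pointwise instead of computing the integral: with `u = ‖x‖²`, `v = ‖y‖²`,
`((u - 2)² + v - 1)² ≤ (u + v + 3)⁴ ≤ 24 t⁻⁴ e^{t (u + v + 3)}` for every `t > 0`, so `q²` is
dominated by `24 t⁻⁴ e^{3t}` times the Gaussian `e^{-(1 - t)(u + v)}`, whose integral over
`ℝⁿ` is `(π / (1 - t))^{n/2}`. The choice `t = 4 / (n + 6)` turns `t⁻⁴` into `(n + 6)⁴ / 256`
and keeps `e^{3t} (1 - t)^{-n/2} ≤ e^{13/5} ≤ 16`.
-/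

open MeasureTheory Real Module

lemma pow_four_le_mul_exp_mul {t s : ℝ} (ht : 0 < t) (hs : 0 ≤ s) :
    s ^ 4 ≤ 24 / t ^ 4 * rexp (t * s) := by
  have h := pow_div_factorial_le_exp (t * s) (mul_nonneg ht.le hs) 4
  rw [div_le_iff₀ (by positivity), mul_pow] at h
  rw [div_mul_eq_mul_div, le_div_iff₀ (by positivity)]
  simpa [Nat.factorial, mul_comm] using h

lemma sq_sub_two_sq_add_sub_one_sq_le {u v : ℝ} (hu : 0 ≤ u) (hv : 0 ≤ v) :
    ((u - 2) ^ 2 + v - 1) ^ 2 ≤ (u + v + 3) ^ 4 := by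
  nlinarith [sq_nonneg (u + v), sq_nonneg (u - 2), mul_nonneg hu hv, sq_nonneg u,
    sq_nonneg v, mul_nonneg (mul_nonneg hu hu) hv, mul_nonneg (mul_nonneg hu hv) hv]

lemma sq_mul_exp_le_mul_exp_mul_exp {t u v : ℝ} (ht : 0 < t) (hu : 0 ≤ u) (hv : 0 ≤ v) :
    (((u - 2) ^ 2 + v - 1) * rexp (-(u + v) / 2)) ^ 2
      ≤ 24 / t ^ 4 * rexp (3 * t) * (rexp (-(1 - t) * u) * rexp (-(1 - t) * v)) := by
  have hexp : rexp (-(u + v) / 2) ^ 2 = rexp (-(u + v)) := by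
    rw [← exp_nat_mul]; ring_nf
  calc (((u - 2) ^ 2 + v - 1) * rexp (-(u + v) / 2)) ^ 2
      = ((u - 2) ^ 2 + v - 1) ^ 2 * rexp (-(u + v)) := by rw [mul_pow, hexp]
    _ ≤ 24 / t ^ 4 * rexp (t * (u + v + 3)) * rexp (-(u + v)) := by
        gcongr
        exact (sq_sub_two_sq_add_sub_one_sq_le hu hv).trans
          (pow_four_le_mul_exp_mul ht (by positivity))
    _ = 24 / t ^ 4 * rexp (3 * t) * (rexp (-(1 - t) * u) * rexp (-(1 - t) * v)) := by
        simp only [mul_assoc, ← exp_add]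
        ring_nf

section GaussianIntegral

variable {E F : Type*}
  [NormedAddCommGroup E] [InnerProductSpace ℝ E] [FiniteDimensional ℝ E]
  [MeasurableSpace E] [BorelSpace E]
  [NormedAddCommGroup F] [InnerProductSpace ℝ F] [FiniteDimensional ℝ F]
  [MeasurableSpace F] [BorelSpace F]

lemma integrable_exp_neg_mul_sq_norm {b : ℝ} (hb : 0 < b) :
    Integrable (fun x : E => rexp (-b * ‖x‖ ^ 2)) :=
  Integrable.of_integral_ne_zero <| by
    rw [GaussianFourier.integral_rexp_neg_mul_sq_norm hb]
    positivity

lemma integrable_exp_neg_mul_sq_norm_prod {b : ℝ} (hb : 0 < b) :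
    Integrable (fun p : E × F => rexp (-b * ‖p.1‖ ^ 2) * rexp (-b * ‖p.2‖ ^ 2)) :=
  (integrable_exp_neg_mul_sq_norm hb).mul_prod (integrable_exp_neg_mul_sq_norm hb)

lemma integral_exp_neg_mul_sq_norm_prod {b : ℝ} (hb : 0 < b) :
    ∫ p : E × F, rexp (-b * ‖p.1‖ ^ 2) * rexp (-b * ‖p.2‖ ^ 2)
      = (π / b) ^ (((finrank ℝ E + finrank ℝ F : ℕ) : ℝ) / 2) := by
  rw [Measure.volume_eq_prod, integral_prod_mul (fun x : E => rexp (-b * ‖x‖ ^ 2))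
    (fun y : F => rexp (-b * ‖y‖ ^ 2)), GaussianFourier.integral_rexp_neg_mul_sq_norm hb,
    GaussianFourier.integral_rexp_neg_mul_sq_norm hb, ← rpow_add (by positivity)]
  push_cast
  ring_nf

lemma integral_sq_le_of_lt_one {t : ℝ} (ht₀ : 0 < t) (ht₁ : t < 1) :
    ∫ p : E × F, (((‖p.1‖ ^ 2 - 2) ^ 2 + ‖p.2‖ ^ 2 - 1) * rexp (-(‖p.1‖ ^ 2 + ‖p.2‖ ^ 2) / 2)) ^ 2
      ≤ 24 / t ^ 4 * rexp (3 * t)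
        * (π / (1 - t)) ^ (((finrank ℝ E + finrank ℝ F : ℕ) : ℝ) / 2) := by
  have hb : 0 < 1 - t := by linarith
  rw [← integral_exp_neg_mul_sq_norm_prod hb, ← integral_const_mul]
  exact integral_mono_of_nonneg (.of_forall fun _ => sq_nonneg _)
    ((integrable_exp_neg_mul_sq_norm_prod hb).const_mul _)
    (.of_forall fun p => sq_mul_exp_le_mul_exp_mul_exp ht₀ (by positivity) (by positivity))

end GaussianIntegral

lemma exp_thirteen_div_five_le : rexp (13 / 5) ≤ 16 := by
  have h13 : rexp 13 < 16 ^ 5 :=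
    calc rexp 13 = rexp 1 ^ 13 := by rw [← exp_nat_mul]; norm_num
      _ < 2.7182818286 ^ 13 := by gcongr; exact exp_one_lt_d9
      _ < 16 ^ 5 := by norm_num
  refine le_of_pow_le_pow_left₀ (n := 5) (by norm_num) (by norm_num) ?_
  rw [← exp_nat_mul]
  norm_num at h13 ⊢
  exact h13.le

lemma bound_at_four_div_add_six_le {N : ℝ} (hN : 0 ≤ N) :
    24 / (4 / (N + 6)) ^ 4 * rexp (3 * (4 / (N + 6))) * (π / (1 - 4 / (N + 6))) ^ (N / 2)
      ≤ 3 / 2 * π ^ (N / 2) * (N + 6) ^ 4 := by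
  have h₂ : 0 < N + 2 := by linarith
  have h₆ : 0 < N + 6 := by linarith
  have hbase : π / (1 - 4 / (N + 6)) = π * ((N + 6) / (N + 2)) := by
    rw [one_sub_div h₆.ne', div_div_eq_mul_div]
    ring_nf
  have hratio : (N + 6) / (N + 2) ≤ rexp (4 / (N + 2)) := by
    rw [show (N + 6) / (N + 2) = 4 / (N + 2) + 1 by rw [div_add_one h₂.ne']; ring_nf]
    exact add_one_le_exp _
  have hexponent : 3 * (4 / (N + 6)) + 4 / (N + 2) * (N / 2) ≤ 13 / 5 := by
    rw [show 3 * (4 / (N + 6)) + 4 / (N + 2) * (N / 2)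
        = (12 * (N + 2) + 2 * N * (N + 6)) / ((N + 6) * (N + 2)) by field_simp; ring,
      div_le_div_iff₀ (by positivity) (by norm_num)]
    nlinarith [sq_nonneg (N - 3)]
  calc 24 / (4 / (N + 6)) ^ 4 * rexp (3 * (4 / (N + 6))) * (π / (1 - 4 / (N + 6))) ^ (N / 2)
      = 3 / 32 * (N + 6) ^ 4 * π ^ (N / 2)
          * (rexp (3 * (4 / (N + 6))) * ((N + 6) / (N + 2)) ^ (N / 2)) := by
        rw [hbase, mul_rpow pi_pos.le (by positivity)]
        field_simp
        ring
    _ ≤ 3 / 32 * (N + 6) ^ 4 * π ^ (N / 2)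
          * (rexp (3 * (4 / (N + 6))) * rexp (4 / (N + 2) * (N / 2))) := by
        rw [exp_mul (4 / (N + 2))]
        gcongr
    _ ≤ 3 / 32 * (N + 6) ^ 4 * π ^ (N / 2) * 16 := by
        gcongr
        rw [← exp_add]
        exact (exp_le_exp.2 hexponent).trans exp_thirteen_div_five_le
    _ = 3 / 2 * π ^ (N / 2) * (N + 6) ^ 4 := by ring

theorem stmt14_general (n i : ℕ) (hi : i < n)
    (q : (EuclideanSpace ℝ (Fin (i + 1)) × EuclideanSpace ℝ (Fin (n - i - 1))) → ℝ)
    (hq : q = fun p => ((‖p.1‖ ^ 2 - 2) ^ 2 + ‖p.2‖ ^ 2 - 1) *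
      Real.exp (-(‖p.1‖ ^ 2 + ‖p.2‖ ^ 2) / 2)) :
    Real.sqrt (∫ p : EuclideanSpace ℝ (Fin (i + 1)) × EuclideanSpace ℝ (Fin (n - i - 1)),
        (q p) ^ 2)
      ≤ Real.sqrt (3 / 2) * Real.pi ^ ((n : ℝ) / 4) * ((n : ℝ) + 6) ^ 2 := by
  subst hq
  have hdim : finrank ℝ (EuclideanSpace ℝ (Fin (i + 1)))
      + finrank ℝ (EuclideanSpace ℝ (Fin (n - i - 1))) = n := by
    simp only [finrank_euclideanSpace_fin]
    omega
  have hN : (0 : ℝ) ≤ n := n.cast_nonneg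
  have ht₁ : 4 / ((n : ℝ) + 6) < 1 := by rw [div_lt_one (by positivity)]; linarith
  have hintegral := integral_sq_le_of_lt_one (E := EuclideanSpace ℝ (Fin (i + 1)))
    (F := EuclideanSpace ℝ (Fin (n - i - 1))) (by positivity) ht₁
  rw [hdim] at hintegral
  calc _ ≤ √(3 / 2 * π ^ ((n : ℝ) / 2) * ((n : ℝ) + 6) ^ 4) :=
        sqrt_le_sqrt (hintegral.trans (bound_at_four_div_add_six_le hN))
    _ = √(3 / 2) * π ^ ((n : ℝ) / 4) * ((n : ℝ) + 6) ^ 2 := by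
        have hπ : √(π ^ ((n : ℝ) / 2)) = π ^ ((n : ℝ) / 4) := by
          rw [sqrt_eq_rpow, ← rpow_mul pi_pos.le]
          ring_nf
        rw [sqrt_mul (by positivity), sqrt_mul (by positivity), hπ,
          show ((n : ℝ) + 6) ^ 4 = (((n : ℝ) + 6) ^ 2) ^ 2 by ring, sqrt_sq (by positivity)]

/-- `‖q_i‖_{L²(ℝⁿ)} ≤ √(3/2) π^{n/4} (n+6)²` for
`q_i(x,y) = ((‖x‖²−2)² + ‖y‖² − 1) e^{−(‖x‖²+‖y‖²)/2}` on `ℝ^{i+1} × ℝ^{n−i−1}`. -/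
theorem stmt14 (n i : ℕ) (hn : 1 ≤ n) (hi : i < n)
    (q : (EuclideanSpace ℝ (Fin (i + 1)) × EuclideanSpace ℝ (Fin (n - i - 1))) → ℝ)
    (hq : q = fun p => ((‖p.1‖ ^ 2 - 2) ^ 2 + ‖p.2‖ ^ 2 - 1) *
      Real.exp (-(‖p.1‖ ^ 2 + ‖p.2‖ ^ 2) / 2)) :
    Real.sqrt (∫ p : EuclideanSpace ℝ (Fin (i + 1)) × EuclideanSpace ℝ (Fin (n - i - 1)),
        (q p) ^ 2)
      ≤ Real.sqrt (3 / 2) * Real.pi ^ ((n : ℝ) / 4) * ((n : ℝ) + 6) ^ 2 :=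
  stmt14_general n i hi q hq
end
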